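/- Identify F₃ = {−1,0,1}, let E = F₃ × F₃, let f be the rank function of the tic-tac-toe matroid on E, and let f*(X) = |X| − 5 + f(E ∖ X) be the rank function of its dual matroid. For i, j ∈ F₃ let L^i_j = {(i,k) : k ∈ F₃, k ≠ j}. Let z_{−1}, z_1 be two distinct elements not in E and let g be a polymatroid on E ∪ {z_{−1}, z_1} with g(X) = f*(X) for every X ⊆ E, such that for each j ∈ {−1, 1}: g({z_j} ∪ L^{−1}_j ∪ L^1_j) = f*(L^{−1}_j ∪ L^1_j) and g(X′ ∪ {z_j}) − g({z_j}) = f*(X′ ∪ L^0_j) − f*(L^0_j) for every X′ ⊆ L^{−1}_j ∪ L^1_j. Then, writing L = {z_{−1}, z_1}, one has g(L) = 2 and g(L ∪ L^i_0) = 3 for every i ∈ F₃; consequently the sets L^{−1}_0, L^0_0, L, L^1_0 form a Vámos configuration in g. -/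

import Mathlib

open Finset

/-- A polymatroid on a finite ground set `E`. -/
def IsPolymatroid {α : Type*} [DecidableEq α] (E : Finset α) (f : Finset α → ℝ) : Prop :=
  f ∅ = 0 ∧
  (∀ ⦃X Y : Finset α⦄, X ⊆ Y → Y ⊆ E → f X ≤ f Y) ∧
  (∀ ⦃X Y : Finset α⦄, X ⊆ E → Y ⊆ E → f (X ∪ Y) + f (X ∩ Y) ≤ f X + f Y)

/-- The sets `L₀, L₁, L₂, L₃` form a Vámos configuration in the polymatroid `g`. -/
def IsVamosConfig {α : Type*} [DecidableEq α] (g : Finset α → ℝ)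
    (L₀ L₁ L₂ L₃ : Finset α) : Prop :=
  g L₀ = 2 ∧ g L₁ = 2 ∧ g L₂ = 2 ∧ g L₃ = 2 ∧
  g (L₀ ∪ L₁) = 3 ∧ g (L₀ ∪ L₂) = 3 ∧ g (L₁ ∪ L₂) = 3 ∧
  g (L₁ ∪ L₃) = 3 ∧ g (L₂ ∪ L₃) = 3 ∧ g (L₀ ∪ L₃) = 4 ∧
  g (L₀ ∪ L₁ ∪ L₂) = 4 ∧ g (L₀ ∪ L₁ ∪ L₃) = 4 ∧
  g (L₀ ∪ L₂ ∪ L₃) = 4 ∧ g (L₁ ∪ L₂ ∪ L₃) = 4 ∧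
  g (L₀ ∪ L₁ ∪ L₂ ∪ L₃) = 4

/-- The points of the affine plane over `F₃`. -/
abbrev Pt := ZMod 3 × ZMod 3

/-- The horizontal line `A_i = {(x, i) : x ∈ F₃}`. -/
def lineA (i : ZMod 3) : Finset Pt := Finset.univ.image (fun x => (x, i))

/-- The vertical line `B_j = {(j, y) : y ∈ F₃}`. -/
def lineB (j : ZMod 3) : Finset Pt := Finset.univ.image (fun y => (j, y))

/-- The circuit-hyperplanes of the tic-tac-toe matroid. -/
def tttCH : Finset (Finset Pt) :=
  (Finset.univ.filter (fun p : ZMod 3 × ZMod 3 => p ≠ (0, 0))).image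
    (fun p => lineA p.1 ∪ lineB p.2)

/-- The rank function of the tic-tac-toe matroid. -/
noncomputable def tttRank (X : Finset Pt) : ℝ :=
  if X ∈ tttCH then 4 else min X.card 5

/-- The rank function of the dual of the tic-tac-toe matroid:
`f*(X) = |X| − 5 + f(E ∖ X)`. -/
noncomputable def tttDualRank (X : Finset Pt) : ℝ :=
  X.card - 5 + tttRank (Finset.univ \ X)

/-- `L^i_j = {(i,k) : k ∈ F₃, k ≠ j}`. -/
def lineL (i j : ZMod 3) : Finset Pt :=
  (Finset.univ.filter (fun k : ZMod 3 => k ≠ j)).image (fun k => (i, k))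

/-!
The dual `f*` of the tic-tac-toe matroid is the sparse paving matroid of rank 4 whose
circuit-hyperplanes are the `2 × 2` subgrids other than `{±1} × {±1}`. By the AK conditions each
`z_j` (`j = ±1`) is a point spanned by `L^{-1}_j` and by `L^1_j`; since `L^{-1}_j ∪ L^0_j` and
`L^1_j ∪ L^0_j` form a modular pair (ranks 3, 3, 4, 2) meeting in `L^0_j`, it is spanned by
`L^0_j` as well. So both new points lie in the closure of every column `B_i`, a set of rank 3,
which bounds the ranks in question from above. The matching lower bounds come from
submodularity against a second column, once one checks that `z_{-1}` is not spanned by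
`L^{-1}_1 ∪ L^1_1`, which gives `g(L) = 2`.
-/

open Sum

def Spans {α : Type*} [DecidableEq α] (g : Finset α → ℝ) (X Z : Finset α) : Prop :=
  g (X ∪ Z) ≤ g X

namespace IsPolymatroid

variable {α : Type*} [DecidableEq α] {E : Finset α} {g : Finset α → ℝ} {X Y Z W : Finset α}

theorem mono (hg : IsPolymatroid E g) (hXY : X ⊆ Y) (hY : Y ⊆ E) : g X ≤ g Y :=
  hg.2.1 hXY hY

theorem submod (hg : IsPolymatroid E g) (hX : X ⊆ E) (hY : Y ⊆ E) :
    g (X ∪ Y) + g (X ∩ Y) ≤ g X + g Y :=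
  hg.2.2 hX hY

theorem submod_union_right (hg : IsPolymatroid E g) (h : X ∪ Y ∪ Z ⊆ E) :
    g (X ∪ Y ∪ Z) + g (X ∩ Y ∪ Z) ≤ g (X ∪ Z) + g (Y ∪ Z) := by
  rw [union_union_distrib_right, inter_union_distrib_right]
  rw [union_union_distrib_right, union_subset_iff] at h
  exact hg.submod h.1 h.2

theorem spans_mono (hg : IsPolymatroid E g) (hXY : X ⊆ Y) (hYZ : Y ∪ Z ⊆ E)
    (h : Spans g X Z) : Spans g Y Z := by
  have hXZY : X ∪ Z ∪ Y = Y ∪ Z := by rw [union_right_comm, union_eq_right.2 hXY]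
  have hsub := hg.submod (X := X ∪ Z) (Y := Y)
    ((union_subset_union_left hXY).trans hYZ) (subset_union_left.trans hYZ)
  have hX : g X ≤ g ((X ∪ Z) ∩ Y) :=
    hg.mono (subset_inter subset_union_left hXY) (inter_subset_right.trans
      (subset_union_left.trans hYZ))
  rw [hXZY] at hsub
  unfold Spans at h ⊢
  linarith

theorem spans_union (hg : IsPolymatroid E g) (hZ : Spans g X Z) (hW : Spans g X W)
    (h : X ∪ Z ∪ W ⊆ E) : Spans g X (Z ∪ W) := by
  have := hg.spans_mono subset_union_left h hW
  unfold Spans at *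
  rw [← union_assoc]
  linarith

theorem spans_inter_of_modular (hg : IsPolymatroid E g) (hX : Spans g X Z) (hY : Spans g Y Z)
    (hmod : g X + g Y ≤ g (X ∪ Y) + g (X ∩ Y)) (h : X ∪ Y ∪ Z ⊆ E) :
    Spans g (X ∩ Y) Z := by
  have hsub := hg.submod_union_right h
  have hmono := hg.mono subset_union_left h
  unfold Spans at *
  linarith

end IsPolymatroid

/-- The dual of the tic-tac-toe matroid is sparse paving of rank 4; its circuit-hyperplanes are
the complements of those of the tic-tac-toe matroid. -/
def tttDualRankNat (X : Finset Pt) : ℕ :=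
  if univ \ X ∈ tttCH then 3 else min X.card 4

theorem tttDualRank_eq (X : Finset Pt) : tttDualRank X = tttDualRankNat X := by
  have hcard : ((univ \ X).card : ℝ) = 9 - X.card := by
    rw [eq_sub_iff_add_eq, ← Nat.cast_add, card_sdiff_add_card_eq_card (subset_univ X)]
    rfl
  unfold tttDualRank tttRank tttDualRankNat
  split_ifs with hX
  · obtain ⟨p, -, hp⟩ := mem_image.1 hX
    have h5 : (univ \ X).card = 5 := by
      rw [← hp]
      exact (by decide : ∀ p : Pt, (lineA p.1 ∪ lineB p.2).card = 5) p
    rw [h5] at hcard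
    push_cast at hcard ⊢
    linarith
  · rw [hcard, Nat.cast_min]
    push_cast
    rcases le_total (X.card : ℝ) 4 with h | h
    · rw [min_eq_right (by linarith : (5 : ℝ) ≤ 9 - X.card), min_eq_left h]
      ring
    · rw [min_eq_left (by linarith : 9 - (X.card : ℝ) ≤ 5), min_eq_right h]
      ring

theorem image_inl_union_pair_eq_univ {α : Type*} [Fintype α] [DecidableEq α]
    {z z' : α ⊕ Fin 2} (hne : z ≠ z') (hz : z ∉ univ.image inl)
    (hz' : z' ∉ univ.image inl) :
    univ.image inl ∪ {z, z'} = univ := by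
  rcases z with p | a
  · simp at hz
  rcases z' with p | b
  · simp at hz'
  refine eq_univ_of_forall ?_
  rintro (p | c)
  · simp
  · fin_cases a <;> fin_cases b <;> fin_cases c <;> simp_all

theorem tttDualRank_of_eq {X : Finset Pt} {n : ℕ} (h : tttDualRankNat X = n) :
    tttDualRank X = n := by
  rw [tttDualRank_eq, h]

theorem rank_image_inl_of_eq {g : Finset (Pt ⊕ Fin 2) → ℝ}
    (hext : ∀ X : Finset Pt, g (X.image inl) = tttDualRank X) {X : Finset Pt} {n : ℕ}
    (h : tttDualRankNat X = n) : g (X.image inl) = n := by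
  rw [hext, tttDualRank_eq, h]

theorem le_rank_image_inl_union {g : Finset (Pt ⊕ Fin 2) → ℝ} (hg : IsPolymatroid univ g)
    (hext : ∀ X : Finset Pt, g (X.image inl) = tttDualRank X) {X : Finset Pt} {n : ℕ}
    (h : tttDualRankNat X = n) (Z : Finset (Pt ⊕ Fin 2)) : n ≤ g (X.image inl ∪ Z) :=
  (rank_image_inl_of_eq hext h).symm.le.trans (hg.mono subset_union_left (subset_univ _))

theorem tttDualRankNat_lineL (i j : ZMod 3) : tttDualRankNat (lineL i j) = 2 := by
  revert i j; decide

theorem tttDualRankNat_lineL_union_lineL_zero {i j : ZMod 3} (hi : i ≠ 0) (hj : j ≠ 0) :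
    tttDualRankNat (lineL i j ∪ lineL 0 j) = 3 := by
  revert i j; decide

theorem tttDualRankNat_lineB (i : ZMod 3) : tttDualRankNat (lineB i) = 3 := by
  revert i; decide

/-- `{z}` is an Ahlswede–Körner extension step of `f` for the pair `(P, Q)` in `g`. -/
def IsAKStep {α β : Type*} [DecidableEq α] [DecidableEq β] (f : Finset α → ℝ)
    (g : Finset (α ⊕ β) → ℝ) (z : α ⊕ β) (P Q : Finset α) : Prop :=
  g ({z} ∪ P.image inl) = f P ∧
    ∀ X ⊆ P, g (X.image inl ∪ {z}) - g {z} = f (X ∪ Q) - f Q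

namespace IsAKStep

variable {g : Finset (Pt ⊕ Fin 2) → ℝ} {z : Pt ⊕ Fin 2} {j : ZMod 3}
  (hAK : IsAKStep tttDualRank g z (lineL (-1) j ∪ lineL 1 j) (lineL 0 j)) (hj : j ≠ 0)
include hAK hj

theorem rank_singleton : g {z} = 1 := by
  have hP : tttDualRank (lineL (-1) j ∪ lineL 1 j) = 3 := tttDualRank_of_eq <|
    (by decide : ∀ j : ZMod 3, j ≠ 0 → tttDualRankNat (lineL (-1) j ∪ lineL 1 j) = 3) j hj
  have hPQ : tttDualRank (lineL (-1) j ∪ lineL 1 j ∪ lineL 0 j) = 4 := tttDualRank_of_eq <|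
    (by decide : ∀ j : ZMod 3, j ≠ 0 →
      tttDualRankNat (lineL (-1) j ∪ lineL 1 j ∪ lineL 0 j) = 4) j hj
  have hQ : tttDualRank (lineL 0 j) = 2 := tttDualRank_of_eq (tttDualRankNat_lineL 0 j)
  have hspan := hAK.1
  rw [union_comm] at hspan
  linarith [hAK.2 _ subset_rfl]

theorem rank_image_union_singleton {X : Finset Pt} (hX : X ⊆ lineL (-1) j ∪ lineL 1 j) :
    g (X.image inl ∪ {z}) = tttDualRank (X ∪ lineL 0 j) - 1 := by
  have hQ : tttDualRank (lineL 0 j) = 2 := tttDualRank_of_eq (tttDualRankNat_lineL 0 j)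
  linarith [hAK.2 X hX, hAK.rank_singleton hj]

variable (hext : ∀ X : Finset Pt, g (X.image inl) = tttDualRank X)
include hext

theorem spans_lineL_of_ne_zero {i : ZMod 3} (hi : i ≠ 0) :
    Spans g ((lineL i j).image inl) {z} := by
  have hL : g ((lineL i j).image inl) = 2 :=
    rank_image_inl_of_eq hext (tttDualRankNat_lineL i j)
  have hLQ : tttDualRank (lineL i j ∪ lineL 0 j) = 3 :=
    tttDualRank_of_eq (tttDualRankNat_lineL_union_lineL_zero hi hj)
  have hLz := hAK.rank_image_union_singleton hj <|
    (by decide : ∀ i j : ZMod 3, i ≠ 0 → lineL i j ⊆ lineL (-1) j ∪ lineL 1 j) i j hi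
  unfold Spans
  linarith

theorem spans_lineL (hg : IsPolymatroid univ g) (i : ZMod 3) :
    Spans g ((lineL i j).image inl) {z} := by
  rcases eq_or_ne i 0 with rfl | hi
  · have hinter : (lineL (-1) j ∪ lineL 0 j) ∩ (lineL 1 j ∪ lineL 0 j) = lineL 0 j :=
      (by decide : ∀ j : ZMod 3, (lineL (-1) j ∪ lineL 0 j) ∩ (lineL 1 j ∪ lineL 0 j) =
        lineL 0 j) j
    have hX : Spans g ((lineL (-1) j ∪ lineL 0 j).image inl) {z} :=
      hg.spans_mono (image_subset_image subset_union_left) (subset_univ _)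
        (hAK.spans_lineL_of_ne_zero hj hext (by decide))
    have hY : Spans g ((lineL 1 j ∪ lineL 0 j).image inl) {z} :=
      hg.spans_mono (image_subset_image subset_union_left) (subset_univ _)
        (hAK.spans_lineL_of_ne_zero hj hext (by decide))
    have hX' : g ((lineL (-1) j ∪ lineL 0 j).image inl) = 3 :=
      rank_image_inl_of_eq hext (tttDualRankNat_lineL_union_lineL_zero (by decide) hj)
    have hY' : g ((lineL 1 j ∪ lineL 0 j).image inl) = 3 :=
      rank_image_inl_of_eq hext (tttDualRankNat_lineL_union_lineL_zero (by decide) hj)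
    have hXY : g ((lineL (-1) j ∪ lineL 0 j ∪ (lineL 1 j ∪ lineL 0 j)).image inl) = 4 :=
      rank_image_inl_of_eq hext <| (by decide : ∀ j : ZMod 3, j ≠ 0 →
        tttDualRankNat (lineL (-1) j ∪ lineL 0 j ∪ (lineL 1 j ∪ lineL 0 j)) = 4) j hj
    have hQ : g ((lineL 0 j).image inl) = 2 :=
      rank_image_inl_of_eq hext (tttDualRankNat_lineL 0 j)
    have := hg.spans_inter_of_modular hX hY (by
      rw [← image_union, ← image_inter _ _ inl_injective, hinter]; linarith) (subset_univ _)
    rwa [← image_inter _ _ inl_injective, hinter] at this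
  · exact hAK.spans_lineL_of_ne_zero hj hext hi

theorem spans_lineB (hg : IsPolymatroid univ g) (i : ZMod 3) :
    Spans g ((lineB i).image inl) {z} :=
  hg.spans_mono (image_subset_image (image_subset_image (subset_univ _))) (subset_univ _)
    (hAK.spans_lineL hj hext hg i)

end IsAKStep

section TwoSteps

variable {g : Finset (Pt ⊕ Fin 2) → ℝ} {zm z1 : Pt ⊕ Fin 2}
  (hg : IsPolymatroid univ g) (hext : ∀ X : Finset Pt, g (X.image inl) = tttDualRank X)
  (hm : IsAKStep tttDualRank g zm (lineL (-1) (-1) ∪ lineL 1 (-1)) (lineL 0 (-1)))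
include hg hext hm

theorem four_le_rank_image_union_singleton :
    4 ≤ g ((lineL (-1) 1 ∪ lineL 1 1).image inl ∪ {zm}) := by
  have h := hg.submod_union_right (X := (lineL (-1) 1 ∪ lineL 1 1).image inl)
    (Y := (lineL (-1) (-1) ∪ lineL 1 (-1)).image inl) (Z := {zm}) (subset_univ _)
  rw [← image_union, ← image_inter _ _ inl_injective] at h
  have hU : 4 ≤
      g ((lineL (-1) 1 ∪ lineL 1 1 ∪ (lineL (-1) (-1) ∪ lineL 1 (-1))).image inl ∪ {zm}) :=
    le_rank_image_inl_union hg hext (by decide) _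
  have hI := hm.rank_image_union_singleton (by decide)
    (inter_subset_right (s₁ := lineL (-1) 1 ∪ lineL 1 1))
  have hP := hm.rank_image_union_singleton (by decide) subset_rfl
  have hIQ : tttDualRank ((lineL (-1) 1 ∪ lineL 1 1) ∩ (lineL (-1) (-1) ∪ lineL 1 (-1)) ∪
    lineL 0 (-1)) = 4 := tttDualRank_of_eq (by decide)
  have hPQ : tttDualRank (lineL (-1) (-1) ∪ lineL 1 (-1) ∪ lineL 0 (-1)) = 4 :=
    tttDualRank_of_eq (by decide)
  linarith

variable (h1 : IsAKStep tttDualRank g z1 (lineL (-1) 1 ∪ lineL 1 1) (lineL 0 1))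
include h1

theorem spans_lineB_pair (i : ZMod 3) : Spans g ((lineB i).image inl) {zm, z1} := by
  rw [insert_eq]
  exact hg.spans_union (hm.spans_lineB (by decide) hext hg i)
    (h1.spans_lineB (by decide) hext hg i) (subset_univ _)

theorem rank_image_lineB_union_pair_le (i : ZMod 3) :
    g ((lineB i).image inl ∪ {zm, z1}) ≤ 3 := by
  have hB : g ((lineB i).image inl) = 3 :=
    rank_image_inl_of_eq hext (tttDualRankNat_lineB i)
  have := spans_lineB_pair hg hext hm h1 i
  unfold Spans at this
  linarith

theorem rank_image_union_pair_le (X : Finset Pt) : g (X.image inl ∪ {zm, z1}) ≤ 4 := by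
  have hspan : Spans g ((univ : Finset Pt).image inl) {zm, z1} :=
    hg.spans_mono (image_subset_image (subset_univ (lineB 0))) (subset_univ _)
      (spans_lineB_pair hg hext hm h1 0)
  have hE : g ((univ : Finset Pt).image inl) = 4 := rank_image_inl_of_eq hext (by decide)
  have hX : g (X.image inl ∪ {zm, z1}) ≤ g ((univ : Finset Pt).image inl ∪ {zm, z1}) :=
    hg.mono (union_subset_union_left (image_subset_image (subset_univ X))) (subset_univ _)
  unfold Spans at hspan
  linarith

variable (hne : zm ≠ z1) (hzm : zm ∉ (univ.image inl : Finset (Pt ⊕ Fin 2)))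
include hne hzm

theorem rank_pair : g {zm, z1} = 2 := by
  have hzm1 := hm.rank_singleton (by decide)
  have hz11 := h1.rank_singleton (by decide)
  have hle : g {zm, z1} ≤ 2 := by
    have h := hg.submod (X := {zm}) (Y := {z1}) (subset_univ _) (subset_univ _)
    rw [← insert_eq, singleton_inter_of_notMem (mem_singleton.not.2 hne), hg.1] at h
    linarith
  have h := hg.submod_union_right (X := (lineL (-1) 1 ∪ lineL 1 1).image inl) (Y := {zm})
    (Z := {z1}) (subset_univ _)
  rw [inter_singleton_of_notMem fun h ↦ hzm (image_subset_image (subset_univ _) h), empty_union,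
    union_assoc, ← insert_eq] at h
  have hP : g ((lineL (-1) 1 ∪ lineL 1 1).image inl ∪ {zm}) ≤
      g ((lineL (-1) 1 ∪ lineL 1 1).image inl ∪ {zm, z1}) :=
    hg.mono (union_subset_union_right (by simp)) (subset_univ _)
  have hPz := h1.rank_image_union_singleton (by decide) subset_rfl
  have hPQ : tttDualRank (lineL (-1) 1 ∪ lineL 1 1 ∪ lineL 0 1) = 4 :=
    tttDualRank_of_eq (by decide)
  linarith [four_le_rank_image_union_singleton hg hext hm]

theorem rank_image_lineL_zero_union_pair (i : ZMod 3) :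
    g ((lineL i 0).image inl ∪ {zm, z1}) = 3 := by
  have hle : g ((lineL i 0).image inl ∪ {zm, z1}) ≤ g ((lineB i).image inl ∪ {zm, z1}) :=
    hg.mono (union_subset_union_left (image_subset_image
      (image_subset_image (subset_univ _)))) (subset_univ _)
  have h := hg.submod_union_right (X := (lineL i 0).image inl) (Y := (lineB (i + 1)).image inl)
    (Z := {zm, z1}) (subset_univ _)
  rw [← image_union, ← image_inter _ _ inl_injective,
    (by decide : ∀ i : ZMod 3, lineL i 0 ∩ lineB (i + 1) = ∅) i, image_empty, empty_union,
    rank_pair hg hext hm h1 hne hzm] at h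
  have hU : 4 ≤ g ((lineL i 0 ∪ lineB (i + 1)).image inl ∪ {zm, z1}) :=
    le_rank_image_inl_union hg hext
      ((by decide : ∀ i : ZMod 3, tttDualRankNat (lineL i 0 ∪ lineB (i + 1)) = 4) i) _
  linarith [rank_image_lineB_union_pair_le hg hext hm h1 i,
    rank_image_lineB_union_pair_le hg hext hm h1 (i + 1)]

theorem rank_image_union_pair_eq_four {i k : ZMod 3} (hik : i ≠ k) {X : Finset Pt}
    (hX : lineL i 0 ∪ lineL k 0 ⊆ X) : g (X.image inl ∪ {zm, z1}) = 4 := by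
  have h := hg.submod_union_right (X := (lineL i 0 ∪ lineL k 0).image inl)
    (Y := (lineB i).image inl) (Z := {zm, z1}) (subset_univ _)
  rw [← image_union, ← image_inter _ _ inl_injective,
    (by decide : ∀ i k : ZMod 3, i ≠ k → (lineL i 0 ∪ lineL k 0) ∩ lineB i = lineL i 0)
      i k hik,
    rank_image_lineL_zero_union_pair hg hext hm h1 hne hzm] at h
  have hU : 4 ≤ g ((lineL i 0 ∪ lineL k 0 ∪ lineB i).image inl ∪ {zm, z1}) :=
    le_rank_image_inl_union hg hext ((by decide : ∀ i k : ZMod 3, i ≠ k →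
      tttDualRankNat (lineL i 0 ∪ lineL k 0 ∪ lineB i) = 4) i k hik) _
  have hX' :
      g ((lineL i 0 ∪ lineL k 0).image inl ∪ {zm, z1}) ≤ g (X.image inl ∪ {zm, z1}) :=
    hg.mono (union_subset_union_left (image_subset_image hX)) (subset_univ _)
  linarith [rank_image_lineB_union_pair_le hg hext hm h1 i,
    rank_image_union_pair_le hg hext hm h1 X]

end TwoSteps

/-- After two AK extension steps on the dual tic-tac-toe matroid (for the pairs
`(L^{−1}_j ∪ L^1_j, L^0_j)`, `j = −1, 1`), the new elements span a "line" `L` with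
`g(L) = 2` and `g(L ∪ L^i_0) = 3` for every `i`, so `L^{−1}_0, L^0_0, L, L^1_0`
form a Vámos configuration. -/
theorem stmt_12 (zm z1 : Pt ⊕ Fin 2) (hne : zm ≠ z1)
    (hzm : zm ∉ (Finset.univ.image Sum.inl : Finset (Pt ⊕ Fin 2)))
    (hz1 : z1 ∉ (Finset.univ.image Sum.inl : Finset (Pt ⊕ Fin 2)))
    (g : Finset (Pt ⊕ Fin 2) → ℝ)
    (hg : IsPolymatroid ((Finset.univ.image Sum.inl : Finset (Pt ⊕ Fin 2)) ∪ {zm, z1}) g)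
    (hext : ∀ X : Finset Pt, g (X.image Sum.inl) = tttDualRank X)
    (hAKm1 : g ({zm} ∪ (lineL (-1) (-1) ∪ lineL 1 (-1)).image Sum.inl) =
        tttDualRank (lineL (-1) (-1) ∪ lineL 1 (-1)) ∧
      ∀ X' ⊆ lineL (-1) (-1) ∪ lineL 1 (-1),
        g (X'.image Sum.inl ∪ {zm}) - g {zm} =
          tttDualRank (X' ∪ lineL 0 (-1)) - tttDualRank (lineL 0 (-1)))
    (hAK1 : g ({z1} ∪ (lineL (-1) 1 ∪ lineL 1 1).image Sum.inl) =
        tttDualRank (lineL (-1) 1 ∪ lineL 1 1) ∧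
      ∀ X' ⊆ lineL (-1) 1 ∪ lineL 1 1,
        g (X'.image Sum.inl ∪ {z1}) - g {z1} =
          tttDualRank (X' ∪ lineL 0 1) - tttDualRank (lineL 0 1)) :
    g {zm, z1} = 2 ∧
    (∀ i : ZMod 3, g ({zm, z1} ∪ (lineL i 0).image Sum.inl) = 3) ∧
    IsVamosConfig g ((lineL (-1) 0).image Sum.inl) ((lineL 0 0).image Sum.inl)
      {zm, z1} ((lineL 1 0).image Sum.inl) := by
  have hg' : IsPolymatroid univ g := by rwa [image_inl_union_pair_eq_univ hne hzm hz1] at hg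
  have hm : IsAKStep tttDualRank g zm _ _ := hAKm1
  have h1 : IsAKStep tttDualRank g z1 _ _ := hAK1
  have hL := rank_pair hg' hext hm h1 hne hzm
  have hML := rank_image_lineL_zero_union_pair hg' hext hm h1 hne hzm
  have hMML {i k : ZMod 3} (hik : i ≠ k) {X : Finset Pt} (hX : lineL i 0 ∪ lineL k 0 ⊆ X) :=
    rank_image_union_pair_eq_four hg' hext hm h1 hne hzm hik hX
  have hM (i : ZMod 3) : g ((lineL i 0).image inl) = 2 :=
    rank_image_inl_of_eq hext (tttDualRankNat_lineL i 0)
  refine ⟨hL, fun i ↦ by rw [union_comm]; exact hML i, hM _, hM _, hL, hM _, ?_, hML _, hML _,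
    ?_, by rw [union_comm]; exact hML 1, ?_, ?_, ?_, ?_, ?_, ?_⟩
  · rw [← image_union]; exact rank_image_inl_of_eq hext (by decide)
  · rw [← image_union]; exact rank_image_inl_of_eq hext (by decide)
  · rw [← image_union]; exact rank_image_inl_of_eq hext (by decide)
  · rw [← image_union]; exact hMML (i := -1) (k := 0) (by decide) subset_rfl
  · rw [← image_union, ← image_union]; exact rank_image_inl_of_eq hext (by decide)
  · rw [union_right_comm, ← image_union]; exact hMML (i := -1) (k := 1) (by decide) subset_rfl
  · rw [union_right_comm, ← image_union]; exact hMML (i := 0) (k := 1) (by decide) subset_rfl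
  · rw [union_right_comm, ← image_union, ← image_union]
    exact hMML (i := -1) (k := 1) (by decide) (by decide)
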